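/- arXiv:1712.02416 — 2 statements merged into one kernel-verified Lean document; each statement's English description precedes it below -/
import Mathlib

section
/- For variables $x_1,\dots,x_n$, $y$, and $\alpha$ in a field of characteristic zero (with all denominators nonzero), the following identity holds: $(1 - \frac{y+1-\alpha}{\alpha}) \prod_{i=1}^n \frac{x_i-y+\alpha-1}{x_i-y+\alpha} + \frac{y+1-\alpha}{\alpha} \prod_{i=1}^n \frac{x_i-y-1}{x_i-y} = 1 - \sum_{i=1}^n \frac{\alpha}{(x_i-y+\alpha)(x_i-y)} \cdot \frac{x_i+1-\alpha}{\alpha} \prod_{k\neq i} \frac{x_k-x_i-1}{x_k-x_i}$. -/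
/-!
Both products are values of `f z = (z + 1 - α) * ∏ i, (x i - z - 1) / (x i - z)`, at `z = y` and
`z = y - α`. As a rational function of `z`, `f` is a linear polynomial plus simple poles at the
`x i`, which gives the partial fraction expansion `mul_prod_sub_one_div_eq_sub_sum_div` below
(proved by induction on the set of poles). Subtracting the expansions at `y` and `y - α`, the
polynomial parts differ by `α` and the poles combine into the sum on the right-hand side.
-/

open Finset

section PartialFractions

variable {K ι : Type*} [Field K] [DecidableEq ι]

lemma mul_prod_erase_insert_div {x : ι → K} {s : Finset ι} {a i : ι} (c z : K) (ha : a ∉ s)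
    (hi : i ∈ s) (hia : x i ≠ x a) (hiz : x i ≠ z) (haz : x a ≠ z) :
    c * (∏ k ∈ (insert a s).erase i, (x k - x i - 1) / (x k - x i)) / (x i - z)
      = (x a - z - 1) / (x a - z)
          * (c * (∏ k ∈ s.erase i, (x k - x i - 1) / (x k - x i)) / (x i - z))
        + c * (∏ k ∈ s.erase i, (x k - x i - 1) / (x k - x i)) / (x i - x a) / (x a - z) := by
  have hai : a ≠ i := fun h => ha (h ▸ hi)
  rw [erase_insert_of_ne hai, prod_insert fun h => ha (mem_of_mem_erase h)]
  have := sub_ne_zero.mpr hia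
  have := sub_ne_zero.mpr hiz
  have := sub_ne_zero.mpr haz
  have := sub_ne_zero.mpr hia.symm
  field_simp
  ring

theorem mul_prod_sub_one_div_eq_sub_sum_div (x : ι → K) (α : K) (s : Finset ι)
    (hx : Set.InjOn x s) (z : K) (hz : ∀ i ∈ s, x i ≠ z) :
    (z + 1 - α) * ∏ i ∈ s, (x i - z - 1) / (x i - z)
      = z + 1 - α + #s
        - ∑ i ∈ s, (x i + 1 - α) * (∏ k ∈ s.erase i, (x k - x i - 1) / (x k - x i))
            / (x i - z) := by
  induction s using Finset.induction_on generalizing z with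
  | empty => simp
  | @insert a s ha ih =>
    have hxs : Set.InjOn x s := hx.mono (by simp)
    have hxa : ∀ i ∈ s, x i ≠ x a := fun i hi =>
      hx.ne (by simp [hi]) (by simp) fun h => ha (h ▸ hi)
    have haz : x a ≠ z := hz a (mem_insert_self a s)
    have ih_z := ih hxs z fun i hi => hz i (mem_insert_of_mem hi)
    -- the residue at the new pole `x a` is the expansion over `s` evaluated at `z = x a`
    have ih_xa := ih hxs (x a) hxa
    have hsum := sum_congr rfl fun i hi =>
      mul_prod_erase_insert_div (x := x) (x i + 1 - α) z ha hi (hxa i hi)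
        (hz i (mem_insert_of_mem hi)) haz
    rw [sum_add_distrib, ← mul_sum, ← sum_div] at hsum
    rw [prod_insert ha, sum_insert ha, card_insert_of_notMem ha, Nat.cast_succ, erase_insert ha,
      hsum]
    have := sub_ne_zero.mpr haz
    field_simp
    linear_combination (x a - z - 1) * ih_z + ih_xa

end PartialFractions

theorem stmt0_general {K : Type*} [Field K] (n : ℕ) (x : Fin n → K) (y α : K)
    (hα : α ≠ 0) (h1 : ∀ i, x i - y ≠ 0) (h2 : ∀ i, x i - y + α ≠ 0)
    (h3 : ∀ i k : Fin n, i ≠ k → x k - x i ≠ 0) :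
    (1 - (y + 1 - α) / α) * ∏ i, (x i - y + α - 1) / (x i - y + α)
      + ((y + 1 - α) / α) * ∏ i, (x i - y - 1) / (x i - y)
    = 1 - ∑ i, α / ((x i - y + α) * (x i - y)) * ((x i + 1 - α) / α)
        * ∏ k ∈ univ.erase i, (x k - x i - 1) / (x k - x i) := by
  have hx : Set.InjOn x (univ : Finset (Fin n)) := fun i _ k _ h =>
    by_contra fun hik => h3 k i (Ne.symm hik) (sub_eq_zero.mpr h)
  have at_y := mul_prod_sub_one_div_eq_sub_sum_div x α univ hx y
    fun i _ => sub_ne_zero.mp (h1 i)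
  have at_y_sub_α := mul_prod_sub_one_div_eq_sub_sum_div x α univ hx (y - α)
    fun i _ => sub_ne_zero.mp (by rw [← sub_add]; exact h2 i)
  simp only [← sub_add] at at_y_sub_α
  have hsum : ∑ i, α / ((x i - y + α) * (x i - y)) * ((x i + 1 - α) / α)
        * ∏ k ∈ univ.erase i, (x k - x i - 1) / (x k - x i)
      = (∑ i, (x i + 1 - α) * (∏ k ∈ univ.erase i, (x k - x i - 1) / (x k - x i)) / (x i - y)
        - ∑ i, (x i + 1 - α) * (∏ k ∈ univ.erase i, (x k - x i - 1) / (x k - x i))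
          / (x i - y + α)) / α := by
    rw [← sum_sub_distrib, sum_div]
    refine sum_congr rfl fun i _ => ?_
    have := h1 i
    have := h2 i
    field_simp
    ring
  rw [hsum]
  field_simp
  linear_combination at_y - at_y_sub_α

/-- Lemma 4.3 of the paper: rational-function identity behind the Pieri rules. -/
theorem stmt0 {K : Type*} [Field K] [CharZero K] (n : ℕ) (x : Fin n → K) (y α : K)
    (hα : α ≠ 0) (h1 : ∀ i, x i - y ≠ 0) (h2 : ∀ i, x i - y + α ≠ 0)
    (h3 : ∀ i k : Fin n, i ≠ k → x k - x i ≠ 0) :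
    (1 - (y + 1 - α) / α) * ∏ i, (x i - y + α - 1) / (x i - y + α)
      + ((y + 1 - α) / α) * ∏ i, (x i - y - 1) / (x i - y)
    = 1 - ∑ i, α / ((x i - y + α) * (x i - y)) * ((x i + 1 - α) / α)
        * ∏ k ∈ univ.erase i, (x k - x i - 1) / (x k - x i) :=
  stmt0_general n x y α hα h1 h2 h3
end

section
/- For $n \geq 1$, let $M$ be the $(n+1)\times(n+1)$ matrix over the field $\mathbb{Q}(x_1,\dots,x_n,y_1,\dots,y_{n+1},\alpha)$ whose first row is all $1$'s and whose $(i+1,j)$ entry is $\frac{\alpha}{(x_i-y_j+\alpha)(x_i-y_j)}$ for $1 \le i \le n$, $1 \le j \le n+1$. For $1 \le j \le n+1$ let $M^{(j)}$ be the $n\times n$ matrix obtained by deleting the first row and the $j$-th column of $M$. Then $\sum_{j=1}^{n+1} (-1)^{j-1}\left[ (1 - \tfrac{y_j+1-\alpha}{\alpha}) \prod_{i=1}^n \tfrac{x_i-y_j+\alpha-1}{x_i-y_j+\alpha} + \tfrac{y_j+1-\alpha}{\alpha} \prod_{i=1}^n \tfrac{x_i-y_j-1}{x_i-y_j}\right]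 \det M^{(j)} = \det M$. -/
/-!
Subtracting `∑ i, f(xᵢ) • Rᵢ₊₁` from the first row of `M`, where
`f(xᵢ) = (xᵢ + 1 - α) / α * ∏_{k ≠ i} (x_k - xᵢ - 1) / (x_k - xᵢ)` (`rowWeight`), leaves the
determinant unchanged and turns the first-row entry in column `j` into the bracketed coefficient of
`det M⁽ʲ⁾`. That is a partial-fraction identity in `t = y_j`: both products
`∏ (c_i - t + a) / (c_i - t)` expand over the simple poles `c_i`, once with `c = x` and once with
`c = x + α`, and the two expansions combine into the entries `α / ((xᵢ - t + α)(xᵢ - t))`.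
Laplace expansion along the new first row gives the theorem. If two `xᵢ` coincide, both sides
vanish because `M` and every `M⁽ʲ⁾` have two equal rows.
-/
open Finset

theorem prod_add_div_eq_one_add_sum {K ι : Type*} [Field K] [DecidableEq ι] (c : ι → K)
    (a t : K) (s : Finset ι) (hc : Set.InjOn c s) (ht : ∀ i ∈ s, c i - t ≠ 0) :
    ∏ i ∈ s, (c i - t + a) / (c i - t)
      = 1 + ∑ i ∈ s, (∏ k ∈ s.erase i, (c k - c i + a) / (c k - c i)) * a / (c i - t) := by
  induction s using Finset.induction_on generalizing t with
  | empty => simp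
  | @insert b s hb ih =>
    have hcs : Set.InjOn c s := hc.mono (by simp)
    have hcb : ∀ i ∈ s, c i - c b ≠ 0 := fun i hi =>
      sub_ne_zero.2 fun h => hb (hc (by simp [hi]) (by simp) h ▸ hi)
    have hbt : c b - t ≠ 0 := ht b (mem_insert_self b s)
    have hterm : ∀ i ∈ s,
        (∏ k ∈ (insert b s).erase i, (c k - c i + a) / (c k - c i)) * a / (c i - t)
          = (c b - t + a) / (c b - t)
              * ((∏ k ∈ s.erase i, (c k - c i + a) / (c k - c i)) * a / (c i - t))
            - a / (c b - t)
              * ((∏ k ∈ s.erase i, (c k - c i + a) / (c k - c i)) * a / (c i - c b)) := by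
      intro i hi
      rw [erase_insert_of_ne (by rintro rfl; exact hb hi),
        prod_insert fun h => hb (mem_of_mem_erase h)]
      generalize ∏ k ∈ s.erase i, (c k - c i + a) / (c k - c i) = P
      have h1 := ht i (by simp [hi])
      have h2 := hcb i hi
      have h3 : c b - c i ≠ 0 := by rw [← neg_sub]; exact neg_ne_zero.2 h2
      field_simp
      ring
    rw [prod_insert hb, sum_insert hb, erase_insert hb, sum_congr rfl hterm, sum_sub_distrib,
      ← mul_sum, ← mul_sum, ih t hcs fun i hi => ht i (by simp [hi]), ih (c b) hcs hcb]
    field_simp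
    ring

theorem Matrix.det_eq_sum_row_zero_add_sum_mul {R : Type*} [CommRing R] {n : ℕ}
    (A : Matrix (Fin (n + 1)) (Fin (n + 1)) R) (w : Fin n → R) :
    A.det = ∑ j : Fin (n + 1), (-1) ^ (j : ℕ) * (A 0 j + ∑ i, w i * A i.succ j)
      * (A.submatrix Fin.succ j.succAbove).det := by
  have hrow : A 0 + ∑ i, w i • A i.succ = ∑ i, (Fin.cons 1 w : Fin (n + 1) → R) i • A i := by
    simp [Fin.sum_univ_succ]
  have hdet : (A.updateRow 0 (A 0 + ∑ i, w i • A i.succ)).det = A.det := by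
    simp [hrow, Matrix.det_updateRow_sum]
  rw [← hdet, Matrix.det_succ_row_zero]
  simp only [← Fin.succAbove_zero, Matrix.submatrix_updateRow_succAbove]
  simp [Finset.sum_apply]

section

variable {K ι : Type*} [Field K] [Fintype ι] [DecidableEq ι]

def rowWeight (x : ι → K) (α : K) (i : ι) : K :=
  (x i + 1 - α) / α * ∏ k ∈ univ.erase i, (x k - x i - 1) / (x k - x i)

theorem prod_sub_one_div_eq_one_sub_sum (x : ι → K) (hx : Function.Injective x) (t : K)
    (ht : ∀ i, x i - t ≠ 0) :
    ∏ i, (x i - t - 1) / (x i - t)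
      = 1 - ∑ i, (∏ k ∈ univ.erase i, (x k - x i - 1) / (x k - x i)) / (x i - t) := by
  simpa [sub_eq_add_neg, div_eq_mul_inv, ← sum_neg_distrib] using
    prod_add_div_eq_one_add_sum x (-1) t univ hx.injOn (fun i _ => ht i)

theorem bracket_eq_one_sub_sum_rowWeight_mul (x : ι → K) (hx : Function.Injective x) {α : K}
    (hα : α ≠ 0) (t : K) (h1 : ∀ i, x i - t ≠ 0) (h2 : ∀ i, x i - t + α ≠ 0) :
    (1 - (t + 1 - α) / α) * ∏ i, (x i - t + α - 1) / (x i - t + α)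
        + (t + 1 - α) / α * ∏ i, (x i - t - 1) / (x i - t)
      = 1 - ∑ i, rowWeight x α i * (α / ((x i - t + α) * (x i - t))) := by
  have hP := prod_sub_one_div_eq_one_sub_sum (fun i => x i + α)
    (add_left_injective α |>.comp hx) t (by simpa [add_sub_right_comm] using h2)
  simp only [add_sub_add_right_eq_sub, add_sub_right_comm _ α t] at hP
  have hterm : ∀ i, rowWeight x α i * (α / ((x i - t + α) * (x i - t)))
      = (1 - (t + 1 - α) / α)
          * ((∏ k ∈ univ.erase i, (x k - x i - 1) / (x k - x i)) / (x i - t + α))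
        + (t + 1 - α) / α * ((∏ k ∈ univ.erase i, (x k - x i - 1) / (x k - x i)) / (x i - t)) := by
    intro i
    have h1 := h1 i
    have h2 := h2 i
    rw [rowWeight]
    generalize ∏ k ∈ univ.erase i, (x k - x i - 1) / (x k - x i) = Q
    field_simp
    ring
  rw [hP, prod_sub_one_div_eq_one_sub_sum x hx t h1, sum_congr rfl fun i _ => hterm i,
    sum_add_distrib, ← mul_sum, ← mul_sum]
  ring

end

theorem stmt3_general {K : Type*} [Field K] (n : ℕ)
    (x : Fin n → K) (y : Fin (n + 1) → K) (α : K) (hα : α ≠ 0)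
    (h1 : ∀ i j, x i - y j ≠ 0) (h2 : ∀ i j, x i - y j + α ≠ 0) :
    let M : Matrix (Fin (n + 1)) (Fin (n + 1)) K := Matrix.of fun i j =>
      Fin.cases 1 (fun i' => α / ((x i' - y j + α) * (x i' - y j))) i
    let Mdel : Fin (n + 1) → Matrix (Fin n) (Fin n) K := fun j => Matrix.of fun i k =>
      α / ((x i - y (j.succAbove k) + α) * (x i - y (j.succAbove k)))
    ∑ j : Fin (n + 1), (-1 : K) ^ (j : ℕ) *
        ((1 - (y j + 1 - α) / α) * ∏ i, (x i - y j + α - 1) / (x i - y j + α)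
          + ((y j + 1 - α) / α) * ∏ i, (x i - y j - 1) / (x i - y j)) * (Mdel j).det
      = M.det := by
  intro M Mdel
  by_cases hx : Function.Injective x
  · rw [M.det_eq_sum_row_zero_add_sum_mul fun i => -rowWeight x α i]
    refine sum_congr rfl fun j _ => ?_
    have hcoef : M 0 j + ∑ i, -rowWeight x α i * M i.succ j
        = 1 - ∑ i, rowWeight x α i * (α / ((x i - y j + α) * (x i - y j))) := by
      simp [M, sub_eq_add_neg]
    have hminor : M.submatrix Fin.succ j.succAbove = Mdel j := rfl
    rw [bracket_eq_one_sub_sum_rowWeight_mul x hx hα (y j) (h1 · j) (h2 · j), hcoef, hminor]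
  · obtain ⟨i, k, hxik, hik⟩ := Function.not_injective_iff.1 hx
    have hM : M.det = 0 :=
      Matrix.det_zero_of_row_eq (Fin.succ_injective _ |>.ne hik) (by ext; simp [M, hxik])
    have hMdel : ∀ j, (Mdel j).det = 0 := fun j =>
      Matrix.det_zero_of_row_eq hik (by ext; simp [Mdel, hxik])
    simp [hM, hMdel]

/-- Identity (4.24) of the paper: the cofactor expansion identity expressing
`det M` via the minors `M⁽ʲ⁾` and the bracketed rational coefficients. -/
theorem stmt3 {K : Type*} [Field K] [CharZero K] (n : ℕ) (hn : 1 ≤ n)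
    (x : Fin n → K) (y : Fin (n + 1) → K) (α : K) (hα : α ≠ 0)
    (h1 : ∀ i j, x i - y j ≠ 0) (h2 : ∀ i j, x i - y j + α ≠ 0) :
    let M : Matrix (Fin (n + 1)) (Fin (n + 1)) K := Matrix.of fun i j =>
      Fin.cases 1 (fun i' => α / ((x i' - y j + α) * (x i' - y j))) i
    let Mdel : Fin (n + 1) → Matrix (Fin n) (Fin n) K := fun j => Matrix.of fun i k =>
      α / ((x i - y (j.succAbove k) + α) * (x i - y (j.succAbove k)))
    ∑ j : Fin (n + 1), (-1 : K) ^ (j : ℕ) *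
        ((1 - (y j + 1 - α) / α) * ∏ i, (x i - y j + α - 1) / (x i - y j + α)
          + ((y j + 1 - α) / α) * ∏ i, (x i - y j - 1) / (x i - y j)) * (Mdel j).det
      = M.det :=
  stmt3_general n x y α hα h1 h2
end
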